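/- arXiv:2407.19391 — 7 statements merged into one kernel-verified Lean document; each statement's English description precedes it below -/
import Mathlib

section
/- Let V be a nonempty finite set of n voters, C a finite set of candidates, and k a positive integer with k ≤ |C|. A committee W ⊆ C with |W| = k satisfies JR with respect to parameter k under every possible approval profile A : V → 2^C if and only if W = C (equivalently, k = |C|). (This is the combinatorial core of the lemma that, in the Candidate-Probability model with 0 < p_{i,c} < 1 for all voters i and candidates c — so that every approval profile is plausible — a committee satisfies JR with probability 1 iff W = C and k = |C|.) -/
/-! If some candidate `c` is outside `W`, the profile in which every voter approves exactly `{c}`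
makes the whole electorate a cohesive group that `W` leaves unrepresented. Conversely, the full
committee represents every nonempty group, and `n ≤ k * |V'|` with `n > 0` forces `V'` to be
nonempty. -/

/-- A committee `W` satisfies justified representation (JR) with respect to the
approval profile `A` and parameter `k`: for every group `V'` of voters with
`k * |V'| ≥ n` (where `n` is the number of voters) whose approval sets have a
common candidate, some voter in `V'` approves a member of `W`. -/
def satisfiesJR {V C : Type*} [Fintype V] [DecidableEq C]
    (A : V → Finset C) (k : ℕ) (W : Finset C) : Prop :=
  ∀ V' : Finset V, Fintype.card V ≤ k * V'.card →
    (∃ c : C, ∀ i ∈ V', c ∈ A i) → ∃ i ∈ V', (A i ∩ W).Nonempty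

section

variable {V C : Type*} [Fintype V] [DecidableEq C]

theorem satisfiesJR_univ [Nonempty V] [Fintype C] (A : V → Finset C) (k : ℕ) :
    satisfiesJR A k Finset.univ := by
  rintro V' hcard ⟨c, hc⟩
  obtain ⟨i, hi⟩ : V'.Nonempty :=
    Finset.card_pos.mp (Nat.pos_of_mul_pos_left (Fintype.card_pos.trans_le hcard))
  exact ⟨i, hi, c, by simpa using hc i hi⟩

theorem not_satisfiesJR_const_singleton {k : ℕ} (hk : 1 ≤ k) {W : Finset C} {c : C}
    (hc : c ∉ W) : ¬ satisfiesJR (fun _ : V => {c}) k W := by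
  intro hJR
  obtain ⟨i, -, x, hx⟩ := hJR Finset.univ
    (by rw [Finset.card_univ]; exact Nat.le_mul_of_pos_left _ hk)
    ⟨c, fun _ _ => Finset.mem_singleton_self c⟩
  rw [Finset.mem_inter, Finset.mem_singleton] at hx
  exact hc (hx.1 ▸ hx.2)

end

theorem stmt_0_general {V C : Type*} [Fintype V] [Nonempty V] [Fintype C] [DecidableEq C]
    (k : ℕ) (hk : 1 ≤ k)
    (W : Finset C) :
    (∀ A : V → Finset C, satisfiesJR A k W) ↔ W = (Finset.univ : Finset C) := by
  constructor
  · intro hJR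
    by_contra hW
    obtain ⟨c, hc⟩ : ∃ c, c ∉ W := by
      simpa [Finset.eq_univ_iff_forall] using hW
    exact not_satisfiesJR_const_singleton hk hc (hJR _)
  · rintro rfl A
    exact satisfiesJR_univ A k

/-- with `V` a nonempty finite set of voters, `C` finite,
`1 ≤ k ≤ |C|` and `|W| = k`, the committee `W` satisfies JR under every
possible approval profile iff `W = C`. -/
theorem stmt_0 {V C : Type*} [Fintype V] [Nonempty V] [Fintype C] [DecidableEq C]
    (k : ℕ) (hk : 1 ≤ k) (hkC : k ≤ Fintype.card C)
    (W : Finset C) (hW : W.card = k) :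
    (∀ A : V → Finset C, satisfiesJR A k W) ↔ W = (Finset.univ : Finset C) :=
  stmt_0_general k hk W
end

section
/- Lottery model: suppose each voter i ∈ V is given a nonempty finite family 𝒮_i of subsets of C (its plausible approval sets), and a plausible approval profile is any profile (A_i)_{i∈V} with A_i ∈ 𝒮_i for every i. Then a committee W ⊆ C satisfies JR (with respect to parameter k) under every plausible approval profile if and only if there do not exist a candidate c ∈ C and a group V₀ ⊆ V with k·|V₀| ≥ n such that every voter i ∈ V₀ has some plausible approval set S ∈ 𝒮_i with c ∈ S and S ∩ W = ∅. (This characterization is the correctness of the polynomial-time algorithm showing that deciding whether a given committee satisfies JR with probability 1 is in P for the Lottery model.) -/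
theorem exists_selection_extending_partial {ι α : Type*} {s : ι → Finset α}
    (hs : ∀ i, (s i).Nonempty) {p : ι → Prop} {P : ι → α → Prop}
    (h : ∀ i, p i → ∃ a ∈ s i, P i a) :
    ∃ f : ι → α, (∀ i, f i ∈ s i) ∧ ∀ i, p i → P i (f i) := by
  classical
  choose g hgs hgP using h
  refine ⟨fun i => if hi : p i then g i hi else (hs i).choose, fun i => ?_, fun i hi => ?_⟩
  · dsimp only
    split_ifs with hi
    exacts [hgs i hi, (hs i).choose_spec]
  · simpa only [dif_pos hi] using hgP i hi

theorem stmt_1_general {V C : Type*} [Fintype V] [DecidableEq C]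
    (k : ℕ)
    (𝒮 : V → Finset (Finset C)) (h𝒮 : ∀ i, (𝒮 i).Nonempty)
    (W : Finset C) :
    (∀ A : V → Finset C, (∀ i, A i ∈ 𝒮 i) → satisfiesJR A k W) ↔
      ¬ ∃ (c : C) (V₀ : Finset V), Fintype.card V ≤ k * V₀.card ∧
        ∀ i ∈ V₀, ∃ S ∈ 𝒮 i, c ∈ S ∧ S ∩ W = ∅ := by
  refine ⟨fun hJR ⟨c, V₀, hcard, hwit⟩ => ?_, fun hno A hA V' hcard ⟨c, hc⟩ => ?_⟩
  · obtain ⟨A, hA, hAwit⟩ := exists_selection_extending_partial h𝒮 hwit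
    obtain ⟨i, hi, hmeet⟩ := hJR A hA V₀ hcard ⟨c, fun i hi => (hAwit i hi).1⟩
    exact hmeet.ne_empty (hAwit i hi).2
  · by_contra! hmiss
    exact hno ⟨c, V', hcard, fun i hi => ⟨A i, hA i, hc i hi, hmiss i hi⟩⟩

/-- Lottery model: each voter `i` has a nonempty finite family
`𝒮 i` of plausible approval sets.  A committee `W` satisfies JR under every
plausible approval profile iff there do not exist a candidate `c` and a group
`V₀` with `k * |V₀| ≥ n` such that every voter in `V₀` has some plausible
approval set containing `c` and disjoint from `W`. -/
theorem stmt_1 {V C : Type*} [Fintype V] [Fintype C] [DecidableEq C]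
    (k : ℕ) (hk : 1 ≤ k)
    (𝒮 : V → Finset (Finset C)) (h𝒮 : ∀ i, (𝒮 i).Nonempty)
    (W : Finset C) :
    (∀ A : V → Finset C, (∀ i, A i ∈ 𝒮 i) → satisfiesJR A k W) ↔
      ¬ ∃ (c : C) (V₀ : Finset V), Fintype.card V ≤ k * V₀.card ∧
        ∀ i ∈ V₀, ∃ S ∈ 𝒮 i, c ∈ S ∧ S ∩ W = ∅ :=
  stmt_1_general k 𝒮 h𝒮 W
end

section
/- Three-Valued Approval (3VA) model with k = n: suppose each voter i ∈ V partitions C into a set a_i of candidates approved with certainty, a set d_i of candidates disapproved with certainty, and a set u_i of unknown candidates (with x_i = |u_i|); the plausible approval sets of voter i are exactly the sets a_i ∪ X with X ⊆ u_i, and a plausible approval profile chooses one plausible approval set for each voter. Let |V| = n ≥ 1, take the JR parameter k = n, fix a committee W ⊆ C, and let y_i = |u_i ∩ W|. Define t_i = 2^{x_i} if a_i ∩ W ≠ ∅; t_i = (2^{y_i} − 1)·2^{x_i − y_i} if a_i ∩ W = ∅ and a_i ≠ ∅; and t_i = (2^{y_i} − 1)·2^{x_i − y_i} + 1 if a_i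 = ∅. Then the number of plausible approval profiles under which W satisfies JR equals ∏_{i∈V} t_i. -/
open Finset

theorem satisfiesJR_iff_forall_inter_nonempty {V C : Type*} [Fintype V] [DecidableEq C]
    {A : V → Finset C} {k : ℕ} {W : Finset C} (hV : 0 < Fintype.card V)
    (hk : Fintype.card V ≤ k) :
    satisfiesJR A k W ↔ ∀ i, (A i).Nonempty → (A i ∩ W).Nonempty := by
  constructor
  · rintro h i ⟨c, hc⟩
    obtain ⟨j, hj, hjW⟩ := h {i} (by simpa using hk) ⟨c, by simpa using hc⟩
    rwa [mem_singleton.1 hj] at hjW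
  · rintro h V' hcard ⟨c, hc⟩
    obtain ⟨i, hi⟩ : V'.Nonempty := by
      rw [← card_pos]
      by_contra! h0
      simp_all
    exact ⟨i, hi, h i ⟨c, hc i hi⟩⟩

section PlausibleSets

variable {C : Type*} [DecidableEq C] {a u : Finset C} (W : Finset C)

theorem card_Icc_union_of_disjoint (hau : Disjoint a u) : #(Icc a (a ∪ u)) = 2 ^ #u := by
  rw [card_Icc_finset subset_union_left, card_union_of_disjoint hau, Nat.add_sub_cancel_left]

theorem card_filter_Icc_inter_eq_empty (hau : Disjoint a u) :
    #{B ∈ Icc a (a ∪ u) | B ∩ W = ∅} =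
      if (a ∩ W).Nonempty then 0 else 2 ^ (#u - #(u ∩ W)) := by
  split_ifs with haW
  · rw [card_eq_zero, filter_eq_empty_iff]
    intro B hB hBW
    rw [← not_nonempty_iff_eq_empty] at hBW
    exact hBW (haW.mono (inter_subset_inter_right (mem_Icc.1 hB).1))
  · have hIcc : {B ∈ Icc a (a ∪ u) | B ∩ W = ∅} = Icc a (a ∪ (u \ W)) := by
      rw [not_nonempty_iff_eq_empty] at haW
      ext B
      simp only [mem_filter, mem_Icc, subset_iff, eq_empty_iff_forall_notMem, mem_inter,
        mem_union, mem_sdiff] at haW ⊢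
      grind
    rw [hIcc, card_Icc_union_of_disjoint (hau.mono_right sdiff_subset), card_sdiff, inter_comm]

theorem card_filter_Icc_eq_empty :
    #{B ∈ Icc a (a ∪ u) | B = ∅} = if a.Nonempty then 0 else 1 := by
  split_ifs with ha
  · rw [card_eq_zero, filter_eq_empty_iff]
    rintro B hB rfl
    exact ha.ne_empty (subset_empty.1 (mem_Icc.1 hB).1)
  · rw [not_nonempty_iff_eq_empty.1 ha, filter_eq', if_pos (by simp)]
    rfl

theorem card_filter_Icc_nonempty_imp_inter_nonempty (hau : Disjoint a u) :
    #{B ∈ Icc a (a ∪ u) | B.Nonempty → (B ∩ W).Nonempty} =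
      if (a ∩ W).Nonempty then 2 ^ #u
      else if a.Nonempty then (2 ^ #(u ∩ W) - 1) * 2 ^ (#u - #(u ∩ W))
      else (2 ^ #(u ∩ W) - 1) * 2 ^ (#u - #(u ∩ W)) + 1 := by
  have hsplit : {B ∈ Icc a (a ∪ u) | B.Nonempty → (B ∩ W).Nonempty} =
      {B ∈ Icc a (a ∪ u) | (B ∩ W).Nonempty} ∪ {B ∈ Icc a (a ∪ u) | B = ∅} := by
    rw [← filter_or]
    refine filter_congr fun B _ => ?_
    rw [← not_nonempty_iff_eq_empty]
    tauto
  have hdisj : Disjoint {B ∈ Icc a (a ∪ u) | (B ∩ W).Nonempty} {B ∈ Icc a (a ∪ u) | B = ∅} :=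
    disjoint_filter.2 fun B _ hBW hB => by simp [hB] at hBW
  have hmeet : #{B ∈ Icc a (a ∪ u) | (B ∩ W).Nonempty} + #{B ∈ Icc a (a ∪ u) | B ∩ W = ∅} =
      2 ^ #u := by
    simp_rw [← card_Icc_union_of_disjoint hau, ← not_nonempty_iff_eq_empty]
    exact card_filter_add_card_filter_not _
  have hyx : #(u ∩ W) ≤ #u := card_le_card inter_subset_left
  have harith : (2 ^ #(u ∩ W) - 1) * 2 ^ (#u - #(u ∩ W)) = 2 ^ #u - 2 ^ (#u - #(u ∩ W)) := by
    rw [Nat.sub_mul, one_mul, ← pow_add, Nat.add_sub_cancel' hyx]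
  rw [hsplit, card_union_of_disjoint hdisj, card_filter_Icc_eq_empty, harith]
  rw [card_filter_Icc_inter_eq_empty W hau] at hmeet
  by_cases haW : (a ∩ W).Nonempty
  · have ha : a.Nonempty := haW.mono inter_subset_left
    simp only [if_pos haW, if_pos ha] at hmeet ⊢
    omega
  · simp only [if_neg haW] at hmeet ⊢
    split_ifs <;> omega

end PlausibleSets

theorem stmt_5_general {V C : Type*} [Fintype V] [DecidableEq C]
    (hn : 1 ≤ Fintype.card V)
    (a u : V → Finset C)
    (hau : ∀ i, Disjoint (a i) (u i))
    (W : Finset C)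
    (t : V → ℕ)
    (ht : ∀ i, t i =
      if (a i ∩ W).Nonempty then 2 ^ (u i).card
      else if (a i).Nonempty then
        (2 ^ (u i ∩ W).card - 1) * 2 ^ ((u i).card - (u i ∩ W).card)
      else
        (2 ^ (u i ∩ W).card - 1) * 2 ^ ((u i).card - (u i ∩ W).card) + 1) :
    Set.ncard {A : V → Finset C |
        (∀ i, a i ⊆ A i ∧ A i ⊆ a i ∪ u i) ∧ satisfiesJR A (Fintype.card V) W}
      = ∏ i : V, t i := by
  classical
  have hprofiles : {A : V → Finset C |
      (∀ i, a i ⊆ A i ∧ A i ⊆ a i ∪ u i) ∧ satisfiesJR A (Fintype.card V) W} =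
      Fintype.piFinset fun i => {B ∈ Icc (a i) (a i ∪ u i) | B.Nonempty → (B ∩ W).Nonempty} := by
    ext A
    simp [satisfiesJR_iff_forall_inter_nonempty hn le_rfl, forall_and]
  rw [hprofiles, Set.ncard_coe_finset, Fintype.card_piFinset]
  exact prod_congr rfl fun i _ =>
    (card_filter_Icc_nonempty_imp_inter_nonempty W (hau i)).trans (ht i).symm

/-- 3VA model with `k = n`: voter `i` partitions the candidates
into certainly approved `a i`, certainly disapproved `d i`, and unknown `u i`
(with `x_i = |u i|`, `y_i = |u i ∩ W|`); a plausible approval set of voter `i`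
is any `a i ∪ X` with `X ⊆ u i`.  With `t i` as defined below, the number of
plausible approval profiles under which `W` satisfies JR (with parameter
`k = n`) equals `∏ i, t i`. -/
theorem stmt_5 {V C : Type*} [Fintype V] [DecidableEq V] [Fintype C] [DecidableEq C]
    (hn : 1 ≤ Fintype.card V)
    (a d u : V → Finset C)
    (hpart : ∀ i, a i ∪ d i ∪ u i = Finset.univ)
    (had : ∀ i, Disjoint (a i) (d i))
    (hau : ∀ i, Disjoint (a i) (u i))
    (hdu : ∀ i, Disjoint (d i) (u i))
    (W : Finset C)
    (t : V → ℕ)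
    (ht : ∀ i, t i =
      if (a i ∩ W).Nonempty then 2 ^ (u i).card
      else if (a i).Nonempty then
        (2 ^ (u i ∩ W).card - 1) * 2 ^ ((u i).card - (u i ∩ W).card)
      else
        (2 ^ (u i ∩ W).card - 1) * 2 ^ ((u i).card - (u i ∩ W).card) + 1) :
    Set.ncard {A : V → Finset C |
        (∀ i, a i ⊆ A i ∧ A i ⊆ a i ∪ u i) ∧ satisfiesJR A (Fintype.card V) W}
      = ∏ i : V, t i :=
  stmt_5_general hn a u hau W t ht
end

section
/- Candidate-Probability reduction for ExistsNecJR: let V be a finite set of n ≥ 1 voters with approval profile A : V → 2^C over a finite candidate set C, let k and r be integers with 1 ≤ r < k. Let V⁺ be a set of n new voters and C⁺ a set of 2k − r new candidates, disjoint from V and C respectively. In the extended election with voter set V ∪ V⁺ (2n voters), candidate set C ∪ C⁺, and parameter 2k, the plausible approval profiles are exactly those in which each original voter i ∈ V approves exactly A_i and each new voter in V⁺ approves an arbitrary subset of C⁺. Then there exists a committee W ⊆ C with |W| = r satisfying JR with respect to (A_i)_{i∈V} and parameter k if and only if there exists a committee W' ⊆ C ∪ C⁺ with |W'| = 2k that satisfies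 JR (with respect to parameter 2k over the 2n voters) under every plausible approval profile of the extended election. -/
open Finset Sum

theorem satisfiesJR.mem_of_forall_eq_singleton {V C : Type*} [Fintype V] [DecidableEq C]
    {A : V → Finset C} {k : ℕ} {W : Finset C} (hW : satisfiesJR A k W) {V' : Finset V} {c : C}
    (hsize : Fintype.card V ≤ k * #V') (hA : ∀ i ∈ V', A i = {c}) : c ∈ W := by
  obtain ⟨i, hi, a, ha⟩ := hW V' hsize ⟨c, fun i hi => by simp [hA i hi]⟩
  rw [hA i hi, mem_inter, mem_singleton] at ha
  exact ha.1 ▸ ha.2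

section Padding

variable {V Vp C Cp : Type*} [Fintype V] [Fintype Vp] [DecidableEq C] [DecidableEq Cp]
  {A : V → Finset C} {B : V ⊕ Vp → Finset (C ⊕ Cp)} {k : ℕ}

theorem satisfiesJR.toLeft (hVp : Fintype.card Vp ≤ Fintype.card V)
    (hBl : ∀ i, B (inl i) = (A i).image inl) {W : Finset (C ⊕ Cp)}
    (hW : satisfiesJR B (2 * k) W) : satisfiesJR A k W.toLeft := by
  rintro V' hsize ⟨c, hc⟩
  have hsize' : Fintype.card (V ⊕ Vp) ≤ 2 * k * #(V'.map (.inl : V ↪ V ⊕ Vp)) := by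
    rw [Fintype.card_sum, card_map]; nlinarith
  obtain ⟨x, hx, y, hy⟩ := hW _ hsize' ⟨inl c, by simpa [hBl] using hc⟩
  obtain ⟨i, hi, rfl⟩ := mem_map.mp hx
  obtain ⟨hyB, hyW⟩ := mem_inter.mp hy
  rw [Function.Embedding.inl_apply, hBl, mem_image] at hyB
  obtain ⟨a, ha, rfl⟩ := hyB
  exact ⟨i, hi, a, mem_inter.mpr ⟨ha, mem_toLeft.mpr hyW⟩⟩

theorem satisfiesJR.disjSum_univ [Fintype Cp] (hn : 1 ≤ Fintype.card V)
    (hVp : Fintype.card V ≤ Fintype.card Vp) (hBl : ∀ i, B (inl i) = (A i).image inl)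
    (hBr : ∀ j, B (inr j) ⊆ univ.image inr) {W : Finset C} (hW : satisfiesJR A k W) :
    satisfiesJR B (2 * k) (W.disjSum univ) := by
  rintro V' hsize ⟨c | d, hc⟩
  · have hV'_toRight : V'.toRight = ∅ := by
      refine eq_empty_of_forall_notMem fun j hj => ?_
      simpa using hBr j (hc _ (mem_toRight.mp hj))
    have hsize' : Fintype.card V ≤ k * #V'.toLeft := by
      have hcard := card_toLeft_add_card_toRight (u := V')
      rw [hV'_toRight, card_empty, add_zero] at hcard
      rw [Fintype.card_sum, ← hcard] at hsize
      nlinarith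
    obtain ⟨i, hi, a, ha⟩ := hW _ hsize' ⟨c, fun i hi => by
      simpa [hBl] using hc _ (mem_toLeft.mp hi)⟩
    obtain ⟨haA, haW⟩ := mem_inter.mp ha
    exact ⟨inl i, mem_toLeft.mp hi, inl a, by simp [hBl, haA, haW]⟩
  · obtain ⟨x, hx⟩ : V'.Nonempty := by
      rw [nonempty_iff_ne_empty]; rintro rfl
      simp [Fintype.card_sum] at hsize; omega
    exact ⟨x, hx, inr d, mem_inter.mpr ⟨hc x hx, by simp⟩⟩

end Padding

theorem stmt_8_general {V C Vp Cp : Type*}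
    [Fintype V] [DecidableEq C] [Fintype Vp] [Fintype Cp] [DecidableEq Cp]
    (hn : 1 ≤ Fintype.card V)
    (k r : ℕ) (hrk : r < k)
    (hVp : Fintype.card Vp = Fintype.card V)
    (hCp : Fintype.card Cp = 2 * k - r)
    (A : V → Finset C) :
    (∃ W : Finset C, W.card = r ∧ satisfiesJR A k W) ↔
      (∃ W' : Finset (C ⊕ Cp), W'.card = 2 * k ∧
        ∀ B : (V ⊕ Vp) → Finset (C ⊕ Cp),
          (∀ i : V, B (Sum.inl i) = (A i).image Sum.inl) →
          (∀ j : Vp, B (Sum.inr j) ⊆ Finset.univ.image (Sum.inr : Cp → C ⊕ Cp)) →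
          satisfiesJR B (2 * k) W') := by
  constructor
  · rintro ⟨W, hcard, hJR⟩
    refine ⟨W.disjSum univ, ?_, fun B hBl hBr => hJR.disjSum_univ hn hVp.ge hBl hBr⟩
    rw [card_disjSum, card_univ, hcard, hCp]; omega
  · rintro ⟨W', hcard, hJR⟩
    have hJR_of (T : Finset (C ⊕ Cp)) (hT : T ⊆ univ.image inr) :
        satisfiesJR (Sum.elim (fun i => (A i).image inl) fun _ : Vp => T) (2 * k) W' :=
      hJR _ (fun _ => rfl) fun _ => hT
    have hW'_toRight : W'.toRight = univ := eq_univ_of_forall fun d => mem_toRight.mpr <|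
      (hJR_of {inr d} (by simp)).mem_of_forall_eq_singleton (V' := univ.map .inr)
        (by rw [Fintype.card_sum, card_map, card_univ, hVp]; nlinarith) (by simp)
    refine ⟨W'.toLeft, ?_, (hJR_of ∅ (empty_subset _)).toLeft hVp.le fun _ => rfl⟩
    have hsplit := card_toLeft_add_card_toRight (u := W')
    rw [hW'_toRight, card_univ, hCp, hcard] at hsplit
    omega

/-- Candidate-Probability reduction for ExistsNecJR: extend the
election `(V, C, A, k)` by a set `Vp` of `n` new voters and a set `Cp` of
`2k - r` new candidates; in the extended election (with `2n` voters and
parameter `2k`) the plausible profiles are exactly those where each original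
voter approves exactly `A i` and each new voter approves an arbitrary subset of
`Cp`.  Then there is a size-`r` committee over `C` satisfying JR (parameter
`k`) iff there is a size-`2k` committee over `C ⊕ Cp` satisfying JR under every
plausible profile of the extended election. -/
theorem stmt_8 {V C Vp Cp : Type*}
    [Fintype V] [Fintype C] [DecidableEq C] [Fintype Vp] [Fintype Cp] [DecidableEq Cp]
    (hn : 1 ≤ Fintype.card V)
    (k r : ℕ) (hr : 1 ≤ r) (hrk : r < k)
    (hVp : Fintype.card Vp = Fintype.card V)
    (hCp : Fintype.card Cp = 2 * k - r)
    (A : V → Finset C) :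
    (∃ W : Finset C, W.card = r ∧ satisfiesJR A k W) ↔
      (∃ W' : Finset (C ⊕ Cp), W'.card = 2 * k ∧
        ∀ B : (V ⊕ Vp) → Finset (C ⊕ Cp),
          (∀ i : V, B (Sum.inl i) = (A i).image Sum.inl) →
          (∀ j : Vp, B (Sum.inr j) ⊆ Finset.univ.image (Sum.inr : Cp → C ⊕ Cp)) →
          satisfiesJR B (2 * k) W') :=
  stmt_8_general hn k r hrk hVp hCp A
end

section
/- Lottery reduction for ExistsNecJR: let V be a finite set of n ≥ 1 voters with approval profile A : V → 2^C over a finite candidate set C, let k and r be integers with 1 ≤ r < k. Let V⁺ be a set of n new voters and C⁺ a set of 2k − r new candidates, disjoint from V and C respectively. In the extended election with voter set V ∪ V⁺ (2n voters), candidate set C ∪ C⁺, and parameter 2k, the plausible approval profiles are exactly those in which each original voter i ∈ V approves exactly A_i and each new voter in V⁺ approves exactly one candidate of C⁺ (a singleton {c} with c ∈ C⁺, chosen independently per voter). Then there exists a committee W ⊆ C with |W| = r satisfying JR with respect to (A_i)_{i∈V} and parameter k if and only if there exists a committee W' ⊆ C ∪ C⁺ with |W'| = 2k that satisfies JR (with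 respect to parameter 2k over the 2n voters) under every plausible approval profile of the extended election. -/
open Finset Sum

theorem mem_of_satisfiesJR_of_forall_eq_singleton {V C : Type*} [Fintype V] [DecidableEq C]
    {A : V → Finset C} {k : ℕ} {W : Finset C} (hW : satisfiesJR A k W) {G : Finset V}
    (hG : Fintype.card V ≤ k * #G) {c : C} (hc : ∀ i ∈ G, A i = {c}) : c ∈ W := by
  obtain ⟨i, hi, x, hx⟩ := hW G hG ⟨c, fun i hi => by simp [hc i hi]⟩
  rw [hc i hi, mem_inter, mem_singleton] at hx
  exact hx.1 ▸ hx.2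

section ExtendedElection

variable {V Vp C D : Type*} [Fintype V] [Fintype Vp] [DecidableEq C] [DecidableEq D]
  {A : V → Finset C} {B : V ⊕ Vp → Finset (C ⊕ D)} {k : ℕ}

theorem satisfiesJR_toLeft {W' : Finset (C ⊕ D)} (hB : satisfiesJR B (2 * k) W')
    (hBA : ∀ i, B (inl i) = (A i).image inl) (hVp : Fintype.card Vp ≤ Fintype.card V) :
    satisfiesJR A k W'.toLeft := by
  intro G hG ⟨c, hc⟩
  have hG' : Fintype.card (V ⊕ Vp) ≤ 2 * k * #(G.map (.inl : V ↪ V ⊕ Vp)) := by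
    rw [card_map, Fintype.card_sum]; nlinarith
  obtain ⟨x, hx, y, hy⟩ := hB _ hG' ⟨inl c, by simpa [hBA] using hc⟩
  obtain ⟨i, hi, rfl⟩ := mem_map.1 hx
  obtain ⟨a, ha, rfl⟩ : ∃ a ∈ A i, inl a = y := by
    simpa [hBA] using (mem_inter.1 hy).1
  exact ⟨i, hi, a, mem_inter.2 ⟨ha, mem_toLeft.2 (mem_inter.1 hy).2⟩⟩

theorem satisfiesJR_disjSum {W : Finset C} (hA : satisfiesJR A k W)
    (hn : 1 ≤ Fintype.card V) (hVp : Fintype.card V ≤ Fintype.card Vp)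
    (hBA : ∀ i, B (inl i) = (A i).image inl) (T : Finset D)
    (hT : ∀ j, (B (inr j) ∩ W.disjSum T).Nonempty) :
    satisfiesJR B (2 * k) (W.disjSum T) := by
  intro G hG ⟨c, hc⟩
  obtain hR | ⟨j, hj⟩ := G.toRight.eq_empty_or_nonempty
  · have hGL : #G.toLeft = #G := by simpa [hR] using card_toLeft_add_card_toRight (u := G)
    rw [Fintype.card_sum, ← hGL] at hG
    obtain ⟨i₀, hi₀⟩ : G.toLeft.Nonempty := card_pos.1 (by nlinarith)
    obtain ⟨c₀, -, rfl⟩ := mem_image.1 (hBA i₀ ▸ hc _ (mem_toLeft.1 hi₀))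
    obtain ⟨i, hi, x, hx⟩ := hA G.toLeft (by nlinarith)
      ⟨c₀, fun i hi => by simpa [hBA] using hc _ (mem_toLeft.1 hi)⟩
    exact ⟨inl i, mem_toLeft.1 hi, inl x, by simpa [hBA] using hx⟩
  · exact ⟨inr j, mem_toRight.1 hj, hT j⟩

end ExtendedElection

theorem stmt_9_general {V C Vp Cp : Type*}
    [Fintype V] [DecidableEq C] [Fintype Vp] [Fintype Cp] [DecidableEq Cp]
    (hn : 1 ≤ Fintype.card V)
    (k r : ℕ) (hrk : r < k)
    (hVp : Fintype.card Vp = Fintype.card V)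
    (hCp : Fintype.card Cp = 2 * k - r)
    (A : V → Finset C) :
    (∃ W : Finset C, W.card = r ∧ satisfiesJR A k W) ↔
      (∃ W' : Finset (C ⊕ Cp), W'.card = 2 * k ∧
        ∀ B : (V ⊕ Vp) → Finset (C ⊕ Cp),
          (∀ i : V, B (Sum.inl i) = (A i).image Sum.inl) →
          (∀ j : Vp, ∃ c : Cp, B (Sum.inr j) = {Sum.inr c}) →
          satisfiesJR B (2 * k) W') := by
  constructor
  · rintro ⟨W, hW, hJR⟩
    refine ⟨W.disjSum univ, by rw [card_disjSum, hW, card_univ, hCp]; omega,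
      fun B hBA hBp => satisfiesJR_disjSum hJR hn hVp.ge hBA univ fun j => ?_⟩
    obtain ⟨c, hc⟩ := hBp j
    exact ⟨inr c, by simp [hc]⟩
  · rintro ⟨W', hW', hJR⟩
    let B (c : Cp) : V ⊕ Vp → Finset (C ⊕ Cp) :=
      Sum.elim (fun i => (A i).image inl) fun _ => {inr c}
    have hB (c : Cp) : satisfiesJR (B c) (2 * k) W' :=
      hJR (B c) (fun _ => rfl) fun _ => ⟨c, rfl⟩
    have hCpW : W'.toRight = univ := eq_univ_of_forall fun c =>
      mem_toRight.2 <| mem_of_satisfiesJR_of_forall_eq_singleton (hB c) (G := univ.map .inr)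
        (by rw [card_map, card_univ, Fintype.card_sum, hVp]; nlinarith) (by simp [B])
    have hleft : #W'.toLeft = r := by
      have := card_toLeft_add_card_toRight (u := W')
      rw [hCpW, card_univ, hCp, hW'] at this
      omega
    obtain ⟨c⟩ : Nonempty Cp := Fintype.card_pos_iff.1 (by omega)
    exact ⟨W'.toLeft, hleft, satisfiesJR_toLeft (hB c) (fun _ => rfl) hVp.le⟩

/-- Lottery reduction for ExistsNecJR: extend the election
`(V, C, A, k)` by a set `Vp` of `n` new voters and a set `Cp` of `2k - r` new
candidates; in the extended election (with `2n` voters and parameter `2k`) the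
plausible profiles are exactly those where each original voter approves exactly
`A i` and each new voter approves exactly one candidate of `Cp` (a singleton).
Then there is a size-`r` committee over `C` satisfying JR (parameter `k`) iff
there is a size-`2k` committee over `C ⊕ Cp` satisfying JR under every
plausible profile of the extended election. -/
theorem stmt_9 {V C Vp Cp : Type*}
    [Fintype V] [Fintype C] [DecidableEq C] [Fintype Vp] [Fintype Cp] [DecidableEq Cp]
    (hn : 1 ≤ Fintype.card V)
    (k r : ℕ) (hr : 1 ≤ r) (hrk : r < k)
    (hVp : Fintype.card Vp = Fintype.card V)
    (hCp : Fintype.card Cp = 2 * k - r)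
    (A : V → Finset C) :
    (∃ W : Finset C, W.card = r ∧ satisfiesJR A k W) ↔
      (∃ W' : Finset (C ⊕ Cp), W'.card = 2 * k ∧
        ∀ B : (V ⊕ Vp) → Finset (C ⊕ Cp),
          (∀ i : V, B (Sum.inl i) = (A i).image Sum.inl) →
          (∀ j : Vp, ∃ c : Cp, B (Sum.inr j) = {Sum.inr c}) →
          satisfiesJR B (2 * k) W') :=
  stmt_9_general hn k r hrk hVp hCp A
end

section
/- Vertex-cover correspondence for JR-counting: let G be a simple graph on vertex set V = {1, …, n} with n even and n ≥ 2, and set k = n/2. The voters are the n vertices. The candidates are one candidate c_e for each edge e of G, together with k additional candidates c⁺_1, …, c⁺_k, and the committee is W = {c⁺_1, …, c⁺_k} (so |W| = k). For each subset S ⊆ V define the approval profile 𝒜^S in which voter i approves the set {c_e : i is an endpoint of edge e} ∪ ({c⁺_1} if i ∈ S, and nothing from {c⁺_1, …, c⁺_k} otherwise). Then W satisfies JR with respect to 𝒜^S and parameter k if and only if S is a vertex cover of G (i.e., every edge of G has at least one endpoint in S). (This one-to-one correspondence between vertex covers and plausible 3VA approval profiles for which W satisfies JR is the core of the #P-completeness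 proof for JR-Probability in the 3VA model.) -/
lemma Sym2.mem_finset_of_two_le_card {α : Type*} [DecidableEq α] {e : Sym2 α} {s : Finset α}
    (hs : ∀ x ∈ s, x ∈ e) (hcard : 2 ≤ s.card) {x : α} (hx : x ∈ e) : x ∈ s := by
  induction e using Sym2.ind with
  | _ u v =>
    have hsub : s ⊆ {u, v} := fun y hy => by simpa using Sym2.mem_iff.mp (hs y hy)
    have hseq : s = {u, v} :=
      Finset.eq_of_subset_of_card_le hsub (Finset.card_le_two.trans hcard)
    rw [hseq]
    simpa using Sym2.mem_iff.mp hx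

namespace SimpleGraph

variable {V F : Type*} [Fintype V] [DecidableEq V] [DecidableEq F]
  (G : SimpleGraph V) [DecidableRel G.Adj] (S : Finset V) (c : F)

def edgeProfile (i : V) : Finset ({e : Sym2 V // e ∈ G.edgeFinset} ⊕ F) :=
  ((G.edgeFinset.attach.filter (fun e => i ∈ e.1)).image Sum.inl) ∪
    (if i ∈ S then {Sum.inr c} else ∅)

variable {G S c}

lemma mem_edgeProfile_inl {i : V} {e : {e : Sym2 V // e ∈ G.edgeFinset}} :
    Sum.inl e ∈ G.edgeProfile S c i ↔ i ∈ e.1 := by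
  unfold edgeProfile
  split_ifs <;> simp

lemma mem_edgeProfile_inr {i : V} {f : F} :
    Sum.inr f ∈ G.edgeProfile S c i ↔ i ∈ S ∧ f = c := by
  unfold edgeProfile
  split_ifs <;> simp [*]

lemma edgeProfile_inter_image_inr_nonempty_iff {W : Finset F} (hc : c ∈ W) {i : V} :
    (G.edgeProfile S c i ∩ W.image Sum.inr).Nonempty ↔ i ∈ S := by
  constructor
  · rintro ⟨x, hx⟩
    obtain ⟨hxA, f, -, rfl⟩ := Finset.mem_inter.mp hx |>.imp_right Finset.mem_image.mp
    exact (mem_edgeProfile_inr.mp hxA).1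
  · intro hi
    exact ⟨Sum.inr c, Finset.mem_inter.mpr
      ⟨mem_edgeProfile_inr.mpr ⟨hi, rfl⟩, Finset.mem_image_of_mem _ hc⟩⟩

theorem satisfiesJR_edgeProfile_iff {W : Finset F} (hc : c ∈ W) {k : ℕ}
    (hpair : Fintype.card V ≤ k * 2) (hsingle : k < Fintype.card V) :
    satisfiesJR (G.edgeProfile S c) k (W.image Sum.inr) ↔ ∀ e ∈ G.edgeFinset, ∃ v ∈ S, v ∈ e := by
  simp only [satisfiesJR, edgeProfile_inter_image_inr_nonempty_iff hc]
  constructor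
  · intro hJR e he
    induction e using Sym2.ind with
    | _ u v =>
      have hcard : ({u, v} : Finset V).card = 2 :=
        Finset.card_pair (G.mem_edgeFinset.mp he).ne
      obtain ⟨i, hi, hiS⟩ := hJR {u, v} (hcard ▸ hpair)
        ⟨Sum.inl ⟨s(u, v), he⟩, fun i hi => mem_edgeProfile_inl.mpr (by simpa using hi)⟩
      exact ⟨i, hiS, by simpa using hi⟩
  · rintro hcover V' hlarge ⟨x, hx⟩
    have htwo : 2 ≤ V'.card := by
      by_contra! h
      have : k * V'.card ≤ k := by
        simpa using Nat.mul_le_mul_left k (Nat.le_of_lt_succ h)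
      omega
    cases x with
    | inl e =>
      obtain ⟨v, hvS, hve⟩ := hcover e.1 e.2
      exact ⟨v, Sym2.mem_finset_of_two_le_card (fun i hi => mem_edgeProfile_inl.mp (hx i hi))
        htwo hve, hvS⟩
    | inr f =>
      obtain ⟨i, hi⟩ := Finset.card_pos.mp (by omega : 0 < V'.card)
      exact ⟨i, hi, (mem_edgeProfile_inr.mp (hx i hi)).1⟩

end SimpleGraph

/-- vertex-cover correspondence for JR-counting: let `G` be a
simple graph on an even number `n ≥ 2` of vertices, `k = n / 2`.  The voters
are the vertices; the candidates are one candidate per edge of `G` together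
with `k` extra candidates, and `W` consists of the `k` extra candidates.  For
`S ⊆ V`, in the profile `𝒜^S` each voter approves the candidates of its
incident edges, plus the first extra candidate `c⁺₁` iff it belongs to `S`
(and no other extra candidate).  Then `W` satisfies JR with respect to `𝒜^S`
and parameter `k` iff `S` is a vertex cover of `G`. -/
theorem stmt_11 {V : Type*} [Fintype V] [DecidableEq V]
    (G : SimpleGraph V) [DecidableRel G.Adj]
    (h2 : 2 ≤ Fintype.card V) (heven : 2 ∣ Fintype.card V)
    (S : Finset V) :
    satisfiesJR
      (fun i : V =>
        ((G.edgeFinset.attach.filter (fun e => i ∈ e.1)).image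
            (Sum.inl : {e : Sym2 V // e ∈ G.edgeFinset} →
              {e : Sym2 V // e ∈ G.edgeFinset} ⊕ Fin (Fintype.card V / 2))) ∪
          (if i ∈ S then
            {Sum.inr (⟨0, Nat.div_pos h2 (by norm_num)⟩ : Fin (Fintype.card V / 2))}
          else ∅))
      (Fintype.card V / 2)
      ((Finset.univ : Finset (Fin (Fintype.card V / 2))).image Sum.inr) ↔
      ∀ e ∈ G.edgeFinset, ∃ v ∈ S, v ∈ e :=
  SimpleGraph.satisfiesJR_edgeProfile_iff (Finset.mem_univ _)
    (Nat.div_mul_cancel heven).ge (Nat.div_lt_self (by omega) one_lt_two)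
end

section
/- Candidate-Probability reduction for ExistsNecEJR: let V be a finite set of n ≥ 1 voters with approval profile A : V → 2^C over a finite candidate set C, let k ≥ 1, and let W ⊆ C with |W| = k. Let V⁺ be a set of n new voters and C⁺ a set of k new candidates, disjoint from V and C respectively. In the extended election with voter set V ∪ V⁺ (2n voters), candidate set C ∪ C⁺, and parameter 2k, the plausible approval profiles are exactly those in which each original voter i ∈ V approves exactly A_i and each new voter in V⁺ approves an arbitrary subset of W ∪ C⁺. Then W satisfies EJR with respect to (A_i)_{i∈V} and parameter k if and only if there exists a committee W' ⊆ C ∪ C⁺ with |W'| = 2k that satisfies EJR (with respect to parameter 2k over the 2n voters) under every plausible approval profile of the extended election; moreover when this holds, W' = W ∪ C⁺ is such a committee. -/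
/-- A committee `W` satisfies extended justified representation (EJR) with
respect to the approval profile `A` and parameter `k`: for every `ℓ ≥ 1` and
every `ℓ`-cohesive group `V'` (i.e. `k * |V'| ≥ ℓ * n` and the voters of `V'`
commonly approve at least `ℓ` candidates), some voter of `V'` approves at
least `ℓ` members of `W`. -/
def satisfiesEJR {V C : Type*} [Fintype V] [Fintype C] [DecidableEq C]
    (A : V → Finset C) (k : ℕ) (W : Finset C) : Prop :=
  ∀ ℓ : ℕ, 1 ≤ ℓ → ∀ V' : Finset V,
    ℓ * Fintype.card V ≤ k * V'.card →
    ℓ ≤ (Finset.univ.filter (fun c : C => ∀ i ∈ V', c ∈ A i)).card →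
    ∃ i ∈ V', ℓ ≤ (A i ∩ W).card

/-! A cohesive group of the extended election containing a new voter is represented by `W ∪ C⁺`,
because that voter's approvals all lie in `W ∪ C⁺`. A group of original voters is cohesive in the
extended election exactly when it is cohesive in the original one (both `n` and `k` are doubled),
and its members meet `W ∪ C⁺` exactly in their approved members of `W`.

Conversely, a committee `W'` that necessarily satisfies EJR contains every `x ∈ W ∪ C⁺`: otherwise,
in the profile where every new voter approves only `x`, the new voters form a `1`-cohesive group
that `W'` does not represent. Having size `2k`, `W'` is then `W ∪ C⁺`, and EJR of `W` follows by
restricting to groups of original voters. -/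

open Finset Function Sum

section

variable {V C Vp Cp : Type*}

def commonApprovals [Fintype C] [DecidableEq C] (A : V → Finset C) (G : Finset V) : Finset C :=
  univ.filter fun c => ∀ i ∈ G, c ∈ A i

theorem mem_commonApprovals [Fintype C] [DecidableEq C] {A : V → Finset C} {G : Finset V}
    {c : C} : c ∈ commonApprovals A G ↔ ∀ i ∈ G, c ∈ A i := by
  simp [commonApprovals]

theorem commonApprovals_map_inl [Fintype C] [DecidableEq C] [Fintype Cp] [DecidableEq Cp]
    {A : V → Finset C} {B : V ⊕ Vp → Finset (C ⊕ Cp)}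
    (hB : ∀ i, B (inl i) = (A i).image inl) {G : Finset V} (hG : G.Nonempty) :
    commonApprovals B (G.map Embedding.inl) = (commonApprovals A G).image inl := by
  obtain ⟨i₀, hi₀⟩ := hG
  ext (c | c) <;> simp [mem_commonApprovals, hB]
  exact ⟨i₀, hi₀⟩

variable (Cp) in
def extendedCommittee [Fintype Cp] [DecidableEq C] [DecidableEq Cp] (W : Finset C) :
    Finset (C ⊕ Cp) :=
  W.image inl ∪ univ.image inr

theorem card_extendedCommittee [Fintype Cp] [DecidableEq C] [DecidableEq Cp] (W : Finset C) :
    #(extendedCommittee Cp W) = #W + Fintype.card Cp := by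
  rw [extendedCommittee, card_union_of_disjoint (by simp [disjoint_left]),
    card_image_of_injective _ inl_injective, card_image_of_injective _ inr_injective, card_univ]

theorem card_image_inl_inter_extendedCommittee [Fintype Cp] [DecidableEq C] [DecidableEq Cp]
    (s W : Finset C) : #(s.image inl ∩ extendedCommittee Cp W) = #(s ∩ W) := by
  rw [← card_image_of_injective (s ∩ W) (inl_injective (β := Cp))]
  congr 1
  ext (c | c) <;> simp [extendedCommittee]

theorem cohesive_map_inl_iff [Fintype V] [Fintype Vp] (hVp : Fintype.card Vp = Fintype.card V)
    (ℓ k : ℕ) (G : Finset V) :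
    ℓ * Fintype.card (V ⊕ Vp) ≤ 2 * k * #(G.map (Embedding.inl : V ↪ V ⊕ Vp)) ↔
      ℓ * Fintype.card V ≤ k * #G := by
  rw [Fintype.card_sum, hVp, card_map, ← two_mul, mul_left_comm, mul_assoc,
    Nat.mul_le_mul_left_iff two_pos]

theorem nonempty_of_cohesive [Fintype V] (hn : 1 ≤ Fintype.card V) {ℓ k : ℕ} (hℓ : 1 ≤ ℓ)
    {G : Finset V} (h : ℓ * Fintype.card V ≤ k * #G) : G.Nonempty :=
  card_pos.1 (Nat.pos_of_mul_pos_left ((Nat.mul_pos hℓ hn).trans_le h))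

section Extension

variable [Fintype V] [Fintype C] [DecidableEq C] [Fintype Vp] [Fintype Cp] [DecidableEq Cp]
  {A : V → Finset C} {B : V ⊕ Vp → Finset (C ⊕ Cp)} {W : Finset C} {k : ℕ}

theorem satisfiesEJR_of_extendedCommittee (hn : 1 ≤ Fintype.card V)
    (hVp : Fintype.card Vp = Fintype.card V) (hB : ∀ i, B (inl i) = (A i).image inl)
    (h : satisfiesEJR B (2 * k) (extendedCommittee Cp W)) : satisfiesEJR A k W := by
  intro ℓ hℓ G hcoh (hcommon : ℓ ≤ #(commonApprovals A G))
  have hG := nonempty_of_cohesive hn hℓ hcoh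
  rw [← cohesive_map_inl_iff hVp] at hcoh
  rw [← card_image_of_injective _ (inl_injective (β := Cp)), ← commonApprovals_map_inl hB hG]
    at hcommon
  obtain ⟨_, hx, hcount⟩ := h ℓ hℓ _ hcoh hcommon
  obtain ⟨i, hi, rfl⟩ := mem_map.1 hx
  refine ⟨i, hi, ?_⟩
  rwa [Embedding.inl_apply, hB, card_image_inl_inter_extendedCommittee] at hcount

theorem satisfiesEJR_extendedCommittee (hn : 1 ≤ Fintype.card V)
    (hVp : Fintype.card Vp = Fintype.card V) (hB₁ : ∀ i, B (inl i) = (A i).image inl)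
    (hB₂ : ∀ j, B (inr j) ⊆ extendedCommittee Cp W) (h : satisfiesEJR A k W) :
    satisfiesEJR B (2 * k) (extendedCommittee Cp W) := by
  intro ℓ hℓ G hcoh (hcommon : ℓ ≤ #(commonApprovals B G))
  by_cases hnew : ∃ j, inr j ∈ G
  · obtain ⟨j, hj⟩ := hnew
    refine ⟨inr j, hj, hcommon.trans (card_le_card fun c hc => ?_)⟩
    have hcj := mem_commonApprovals.1 hc _ hj
    exact mem_inter.2 ⟨hcj, hB₂ j hcj⟩
  · simp only [not_exists] at hnew
    have hG : G = G.toLeft.map Embedding.inl := by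
      ext (i | j) <;> simp [hnew]
    rw [hG, cohesive_map_inl_iff hVp] at hcoh
    rw [hG, commonApprovals_map_inl hB₁ (nonempty_of_cohesive hn hℓ hcoh),
      card_image_of_injective _ inl_injective] at hcommon
    obtain ⟨i, hi, hcount⟩ := h ℓ hℓ G.toLeft hcoh hcommon
    refine ⟨inl i, by simpa using hi, ?_⟩
    rwa [hB₁, card_image_inl_inter_extendedCommittee]

theorem extendedCommittee_subset_of_forall_satisfiesEJR (hk : 1 ≤ k)
    (hVp : Fintype.card Vp = Fintype.card V) {W' : Finset (C ⊕ Cp)}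
    (hW' : ∀ B : V ⊕ Vp → Finset (C ⊕ Cp), (∀ i, B (inl i) = (A i).image inl) →
      (∀ j, B (inr j) ⊆ extendedCommittee Cp W) → satisfiesEJR B (2 * k) W') :
    extendedCommittee Cp W ⊆ W' := by
  intro x hx
  by_contra hxW'
  set B := Sum.elim (fun i => (A i).image inl) fun _ : Vp => ({x} : Finset (C ⊕ Cp))
  have hcoh : 1 * Fintype.card (V ⊕ Vp) ≤ 2 * k * #(univ.map (Embedding.inr : Vp ↪ V ⊕ Vp)) := by
    rw [Fintype.card_sum, card_map, card_univ, hVp]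
    nlinarith
  have hcommon : 1 ≤ #(commonApprovals B (univ.map Embedding.inr)) :=
    card_pos.2 ⟨x, mem_commonApprovals.2 (by simp [B])⟩
  obtain ⟨_, hj, hcount⟩ := hW' B (fun _ => rfl) (fun _ => singleton_subset_iff.2 hx) 1 le_rfl
    _ hcoh hcommon
  obtain ⟨j, -, rfl⟩ := mem_map.1 hj
  simp [B, hxW'] at hcount

end Extension

end

/-- Candidate-Probability reduction for ExistsNecEJR: extend the
election `(V, C, A, k)` and a committee `W ⊆ C` of size `k` by a set `Vp` of
`n` new voters and a set `Cp` of `k` new candidates; in the extended election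
(with `2n` voters and parameter `2k`) the plausible profiles are exactly those
where each original voter approves exactly `A i` and each new voter approves an
arbitrary subset of `W ∪ Cp`.  Then `W` satisfies EJR (parameter `k`) iff some
size-`2k` committee over `C ⊕ Cp` satisfies EJR under every plausible profile
of the extended election; moreover, in that case `W ∪ Cp` is such a committee. -/
theorem stmt_12 {V C Vp Cp : Type*}
    [Fintype V] [Fintype C] [DecidableEq C] [Fintype Vp] [Fintype Cp] [DecidableEq Cp]
    (hn : 1 ≤ Fintype.card V)
    (k : ℕ) (hk : 1 ≤ k)
    (hVp : Fintype.card Vp = Fintype.card V)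
    (hCp : Fintype.card Cp = k)
    (A : V → Finset C) (W : Finset C) (hW : W.card = k) :
    (satisfiesEJR A k W ↔
      (∃ W' : Finset (C ⊕ Cp), W'.card = 2 * k ∧
        ∀ B : (V ⊕ Vp) → Finset (C ⊕ Cp),
          (∀ i : V, B (Sum.inl i) = (A i).image Sum.inl) →
          (∀ j : Vp, B (Sum.inr j) ⊆
            W.image Sum.inl ∪ Finset.univ.image (Sum.inr : Cp → C ⊕ Cp)) →
          satisfiesEJR B (2 * k) W')) ∧
    (satisfiesEJR A k W →
      ∀ B : (V ⊕ Vp) → Finset (C ⊕ Cp),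
        (∀ i : V, B (Sum.inl i) = (A i).image Sum.inl) →
        (∀ j : Vp, B (Sum.inr j) ⊆
          W.image Sum.inl ∪ Finset.univ.image (Sum.inr : Cp → C ⊕ Cp)) →
        satisfiesEJR B (2 * k)
          (W.image Sum.inl ∪ Finset.univ.image (Sum.inr : Cp → C ⊕ Cp))) := by
  have hcard : #(extendedCommittee Cp W) = 2 * k := by
    rw [card_extendedCommittee, hW, hCp, two_mul]
  refine ⟨⟨fun h => ⟨_, hcard, fun B hB₁ hB₂ => satisfiesEJR_extendedCommittee hn hVp hB₁ hB₂ h⟩,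
    ?_⟩, fun h B hB₁ hB₂ => satisfiesEJR_extendedCommittee hn hVp hB₁ hB₂ h⟩
  rintro ⟨W', hW'card, hW'⟩
  obtain rfl : extendedCommittee Cp W = W' :=
    eq_of_subset_of_card_le (extendedCommittee_subset_of_forall_satisfiesEJR hk hVp hW')
      (by rw [hW'card, hcard])
  exact satisfiesEJR_of_extendedCommittee hn hVp (fun _ => rfl)
    (hW' (Sum.elim (fun i => (A i).image inl) fun _ => ∅) (fun _ => rfl) fun _ => empty_subset _)
end
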